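/- arXiv:1405.4211 — 3 statements merged into one kernel-verified Lean document; each statement's English description precedes it below -/
import Mathlib

section
/- Let Q be a type with a binary operation ▷ satisfying the involutory quandle identities Q1: x ▷ x = x, Q2': (x ▷ y) ▷ y = x, and Q3: (x ▷ z) ▷ (y ▷ z) = (x ▷ y) ▷ z for all x, y, z ∈ Q. If elements a1, …, a10 ∈ Q satisfy the culprit relations a1 = a9 ▷ a7, a3 = a1 ▷ a2, a2 = a3 ▷ a4, a5 = a2 ▷ a10, a6 = a5 ▷ a4, a7 = a6 ▷ a1, a8 = a7 ▷ a4, a10 = a8 ▷ a9, a4 = a10 ▷ a3, a9 = a4 ▷ a8, then a1 = a2, a2 = a3, a3 = a4, a4 = a5, a5 = a6, a6 = a7, a7 = a8, a8 = a9, and a9 = a10 (i.e. all ten elements are equal). -/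
/-!
Put `p = a4 ▷ a7`. Idempotency and right distributivity give the flexible law
`x ▷ (y ▷ x) = (x ▷ y) ▷ x`, from which `p = a9 ▷ a4` and `a8 ▷ a7 = a7 ▷ p`; distributing over the
crossings under `a4` turns the latter into `a8 ▷ a7 = a4 ▷ a2`. Applying `▷ a2` to
`p ▷ (a8 ▷ a7) = a9 ▷ a7 = a1` then yields `(p ▷ a2) ▷ a4 = a3`, so `p ▷ a2 = a2` and `p = a2`.
Now `a7 ▷ a2 = a7 ▷ p = a4 ▷ a2`, whence `a7 = a4` and `a2 = a4 ▷ a4 = a4`, and the relations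
propagate this common value to every arc.
-/

structure IsInvolutoryQuandle {Q : Type*} (op : Q → Q → Q) : Prop where
  op_self : ∀ x, op x x = x
  op_op_cancel : ∀ x y, op (op x y) y = x
  op_op_distrib : ∀ x y z, op (op x z) (op y z) = op (op x y) z

structure IsCulpritColoring {Q : Type*} (op : Q → Q → Q) (a1 a2 a3 a4 a5 a6 a7 a8 a9 a10 : Q) :
    Prop where
  a1_eq : a1 = op a9 a7
  a3_eq : a3 = op a1 a2
  a2_eq : a2 = op a3 a4
  a5_eq : a5 = op a2 a10
  a6_eq : a6 = op a5 a4
  a7_eq : a7 = op a6 a1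
  a8_eq : a8 = op a7 a4
  a10_eq : a10 = op a8 a9
  a4_eq : a4 = op a10 a3
  a9_eq : a9 = op a4 a8

section

variable {Q : Type*} {op : Q → Q → Q}

local infixl:70 " ▷ " => op

namespace IsInvolutoryQuandle

theorem op_left_injective (hq : IsInvolutoryQuandle op) (y : Q) : Function.Injective (· ▷ y) :=
  Function.LeftInverse.injective (g := (· ▷ y)) fun x => hq.op_op_cancel x y

theorem op_eq_iff_eq_op (hq : IsInvolutoryQuandle op) {x y z : Q} : x ▷ y = z ↔ x = z ▷ y :=
  ⟨fun h => h ▸ (hq.op_op_cancel x y).symm, fun h => h ▸ hq.op_op_cancel z y⟩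

theorem op_eq_right_iff (hq : IsInvolutoryQuandle op) {x y : Q} : x ▷ y = y ↔ x = y := by
  rw [hq.op_eq_iff_eq_op, hq.op_self]

theorem op_eq_of_eq (hq : IsInvolutoryQuandle op) {x y a : Q} (hx : x = a) (hy : y = a) :
    x ▷ y = a := by
  rw [hx, hy, hq.op_self]

theorem flexible (hq : IsInvolutoryQuandle op) (x y : Q) : x ▷ (y ▷ x) = x ▷ y ▷ x := by
  rw [← hq.op_op_distrib, hq.op_self]

end IsInvolutoryQuandle

namespace IsCulpritColoring

variable {a1 a2 a3 a4 a5 a6 a7 a8 a9 a10 : Q}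

theorem a9_op_a4 (hq : IsInvolutoryQuandle op)
    (hc : IsCulpritColoring op a1 a2 a3 a4 a5 a6 a7 a8 a9 a10) : a9 ▷ a4 = a4 ▷ a7 := by
  rw [hc.a9_eq, hc.a8_eq, hq.flexible, hq.op_op_cancel]

theorem a10_op_a4 (hq : IsInvolutoryQuandle op)
    (hc : IsCulpritColoring op a1 a2 a3 a4 a5 a6 a7 a8 a9 a10) : a10 ▷ a4 = a4 ▷ a2 := by
  rw [← hq.op_eq_iff_eq_op]
  calc a10 ▷ a4 ▷ a2 = a10 ▷ a4 ▷ (a3 ▷ a4) := by rw [← hc.a2_eq]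
    _ = a4 := by rw [hq.op_op_distrib, ← hc.a4_eq, hq.op_self]

theorem a7_op_a4_op_a7 (hq : IsInvolutoryQuandle op)
    (hc : IsCulpritColoring op a1 a2 a3 a4 a5 a6 a7 a8 a9 a10) : a7 ▷ (a4 ▷ a7) = a4 ▷ a2 :=
  calc a7 ▷ (a4 ▷ a7) = a8 ▷ a4 ▷ (a9 ▷ a4) := by
        rw [← hc.a9_op_a4 hq, hc.a8_eq, hq.op_op_cancel]
    _ = a10 ▷ a4 := by rw [hq.op_op_distrib, hc.a10_eq]
    _ = a4 ▷ a2 := hc.a10_op_a4 hq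

theorem a4_op_a7 (hq : IsInvolutoryQuandle op)
    (hc : IsCulpritColoring op a1 a2 a3 a4 a5 a6 a7 a8 a9 a10) : a4 ▷ a7 = a2 := by
  have h87 : a8 ▷ a7 = a4 ▷ a2 := by rw [hc.a8_eq, ← hq.flexible, hc.a7_op_a4_op_a7 hq]
  have h : a4 ▷ a7 ▷ a2 ▷ a4 = a3 :=
    calc a4 ▷ a7 ▷ a2 ▷ a4 = a4 ▷ a7 ▷ a2 ▷ (a8 ▷ a7 ▷ a2) := by rw [h87, hq.op_op_cancel]
      _ = a4 ▷ a7 ▷ (a8 ▷ a7) ▷ a2 := hq.op_op_distrib _ _ _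
      _ = a3 := by rw [hq.op_op_distrib, ← hc.a9_eq, ← hc.a1_eq, ← hc.a3_eq]
  rwa [hq.op_eq_iff_eq_op, ← hc.a2_eq, hq.op_eq_right_iff] at h

theorem a7_eq_a4 (hq : IsInvolutoryQuandle op)
    (hc : IsCulpritColoring op a1 a2 a3 a4 a5 a6 a7 a8 a9 a10) : a7 = a4 := by
  apply hq.op_left_injective a2
  simpa only [hc.a4_op_a7 hq] using hc.a7_op_a4_op_a7 hq

theorem a2_eq_a4 (hq : IsInvolutoryQuandle op)
    (hc : IsCulpritColoring op a1 a2 a3 a4 a5 a6 a7 a8 a9 a10) : a2 = a4 := by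
  rw [← hc.a4_op_a7 hq, hc.a7_eq_a4 hq, hq.op_self]

end IsCulpritColoring

end

theorem culprit_unknot (Q : Type*) (op : Q → Q → Q)
    (Q1 : ∀ x : Q, op x x = x)
    (Q2' : ∀ x y : Q, op (op x y) y = x)
    (Q3 : ∀ x y z : Q, op (op x z) (op y z) = op (op x y) z)
    (a1 a2 a3 a4 a5 a6 a7 a8 a9 a10 : Q)
    (h1 : a1 = op a9 a7) (h2 : a3 = op a1 a2) (h3 : a2 = op a3 a4)
    (h4 : a5 = op a2 a10) (h5 : a6 = op a5 a4) (h6 : a7 = op a6 a1)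
    (h7 : a8 = op a7 a4) (h8 : a10 = op a8 a9) (h9 : a4 = op a10 a3)
    (h10 : a9 = op a4 a8) :
    a1 = a2 ∧ a2 = a3 ∧ a3 = a4 ∧ a4 = a5 ∧ a5 = a6 ∧ a6 = a7 ∧
    a7 = a8 ∧ a8 = a9 ∧ a9 = a10 := by
  have hq : IsInvolutoryQuandle op := ⟨Q1, Q2', Q3⟩
  have hc : IsCulpritColoring op a1 a2 a3 a4 a5 a6 a7 a8 a9 a10 :=
    ⟨h1, h2, h3, h4, h5, h6, h7, h8, h9, h10⟩
  have e7 : a7 = a4 := hc.a7_eq_a4 hq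
  have e2 : a2 = a4 := hc.a2_eq_a4 hq
  have e3 : a3 = a4 := (hq.op_eq_iff_eq_op.1 h3.symm).trans (hq.op_eq_of_eq e2 rfl)
  have e8 : a8 = a4 := h7.trans (hq.op_eq_of_eq e7 rfl)
  have e9 : a9 = a4 := h10.trans (hq.op_eq_of_eq rfl e8)
  have e1 : a1 = a4 := h1.trans (hq.op_eq_of_eq e9 e7)
  have e10 : a10 = a4 := h8.trans (hq.op_eq_of_eq e8 e9)
  have e5 : a5 = a4 := h4.trans (hq.op_eq_of_eq e2 e10)
  have e6 : a6 = a4 := (hq.op_eq_iff_eq_op.1 h6.symm).trans (hq.op_eq_of_eq e7 e1)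
  simp only [e1, e2, e3, e5, e6, e7, e8, e9, e10, and_self]
end

section
/- There exists a type Q having exactly 2 elements, together with a binary operation ▷ on Q satisfying Q2': (x ▷ y) ▷ y = x and Q3: (x ▷ z) ▷ (y ▷ z) = (x ▷ y) ▷ z (but not required to satisfy x ▷ x = x), and elements a1, …, a10 ∈ Q satisfying the culprit relations a1 = a9 ▷ a7, a3 = a1 ▷ a2, a2 = a3 ▷ a4, a5 = a2 ▷ a10, a6 = a5 ▷ a4, a7 = a6 ▷ a1, a8 = a7 ▷ a4, a10 = a8 ▷ a9, a4 = a10 ▷ a3, a9 = a4 ▷ a8, such that not all of a1, …, a10 are equal. (A witness is ZMod 2 with x ▷ y := x + 1.) This shows the culprit diagram cannot be untangled using only Reidemeister moves of types II and III. -/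
/-!
Let every element act by one and the same translation `x ↦ x + c` with `c + c = 0`. Then Q2' and Q3
hold, while Q1 fails as soon as `c ≠ 0`. For `c = 1` in `ZMod 2` the culprit relation
`aᵢ = aⱼ ▷ aₖ` ignores the over-arc `aₖ` and only says `aᵢ ≠ aⱼ`. The ten relations join the arcs
into the single cycle `a1 a9 a4 a10 a8 a7 a6 a5 a2 a3` of even length, so colouring the arcs
alternately along it satisfies all of them.
-/

section ShiftOp

variable {A : Type*}

def shiftOp [Add A] (c : A) (x _ : A) : A := x + c

theorem shiftOp_shiftOp_right [AddMonoid A] {c : A} (hc : c + c = 0) (x y : A) :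
    shiftOp c (shiftOp c x y) y = x := by
  simp only [shiftOp, add_assoc, hc, add_zero]

theorem shiftOp_rightDistrib [Add A] (c x y z : A) :
    shiftOp c (shiftOp c x z) (shiftOp c y z) = shiftOp c (shiftOp c x y) z :=
  rfl

end ShiftOp

theorem culprit_needs_RM1 :
    ∃ (Q : Type) (op : Q → Q → Q), Nat.card Q = 2 ∧
      (∀ x y : Q, op (op x y) y = x) ∧
      (∀ x y z : Q, op (op x z) (op y z) = op (op x y) z) ∧
      ∃ a1 a2 a3 a4 a5 a6 a7 a8 a9 a10 : Q,
        a1 = op a9 a7 ∧ a3 = op a1 a2 ∧ a2 = op a3 a4 ∧ a5 = op a2 a10 ∧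
        a6 = op a5 a4 ∧ a7 = op a6 a1 ∧ a8 = op a7 a4 ∧ a10 = op a8 a9 ∧
        a4 = op a10 a3 ∧ a9 = op a4 a8 ∧
        ¬(a1 = a2 ∧ a2 = a3 ∧ a3 = a4 ∧ a4 = a5 ∧ a5 = a6 ∧ a6 = a7 ∧
          a7 = a8 ∧ a8 = a9 ∧ a9 = a10) := by
  refine ⟨ZMod 2, shiftOp 1, Nat.card_zmod 2, shiftOp_shiftOp_right (by decide),
    shiftOp_rightDistrib 1, 1, 1, 0, 1, 0, 1, 0, 1, 0, 0, ?_⟩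
  decide
end

section
/- There exists a type Q having exactly 4 elements, together with a binary operation ▷ on Q satisfying Q1: x ▷ x = x and Q2': (x ▷ y) ▷ y = x (but not required to satisfy the self-distributivity identity), and elements a1, …, a10 ∈ Q satisfying the culprit relations a1 = a9 ▷ a7, a3 = a1 ▷ a2, a2 = a3 ▷ a4, a5 = a2 ▷ a10, a6 = a5 ▷ a4, a7 = a6 ▷ a1, a8 = a7 ▷ a4, a10 = a8 ▷ a9, a4 = a10 ▷ a3, a9 = a4 ▷ a8, such that not all of a1, …, a10 are equal. This shows the culprit diagram cannot be untangled using only Reidemeister moves of types I and II. -/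
/-- The right translation `· ▷ y`: the identity or a transposition not moving `y`, hence an
involution fixing `y`, which is all that Q1 and Q2' ask for. -/
def culpritShift : Fin 4 → Equiv.Perm (Fin 4)
  | 0 => 1
  | 1 => Equiv.swap 0 2
  | 2 => Equiv.swap 1 3
  | 3 => Equiv.swap 1 2

def culpritOp (x y : Fin 4) : Fin 4 :=
  culpritShift y x

theorem culpritOp_self (x : Fin 4) : culpritOp x x = x := by
  fin_cases x <;> rfl

theorem culpritOp_culpritOp (x y : Fin 4) : culpritOp (culpritOp x y) y = x := by
  fin_cases y <;> simp [culpritOp, culpritShift, Equiv.swap_apply_self]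

theorem culprit_needs_RM3 :
    ∃ (Q : Type) (op : Q → Q → Q), Nat.card Q = 4 ∧
      (∀ x : Q, op x x = x) ∧
      (∀ x y : Q, op (op x y) y = x) ∧
      ∃ a1 a2 a3 a4 a5 a6 a7 a8 a9 a10 : Q,
        a1 = op a9 a7 ∧ a3 = op a1 a2 ∧ a2 = op a3 a4 ∧ a5 = op a2 a10 ∧
        a6 = op a5 a4 ∧ a7 = op a6 a1 ∧ a8 = op a7 a4 ∧ a10 = op a8 a9 ∧
        a4 = op a10 a3 ∧ a9 = op a4 a8 ∧
        ¬(a1 = a2 ∧ a2 = a3 ∧ a3 = a4 ∧ a4 = a5 ∧ a5 = a6 ∧ a6 = a7 ∧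
          a7 = a8 ∧ a8 = a9 ∧ a9 = a10) := by
  refine ⟨Fin 4, culpritOp, Nat.card_fin 4, culpritOp_self, culpritOp_culpritOp,
    3, 3, 3, 1, 1, 1, 2, 0, 1, 2, ?_⟩
  decide
end
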